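/- For every iteration i of the greedy algorithm and every candidate v ∉ Z_i, the marginal gain satisfies Δ(v | Z_i) := f(Z_i ∪ {v}) − f(Z_i) ≥ w_i^T v, where w_i^{(n)} = λ^{c_i(n)} and c_i(n) is the number of elements z ∈ Z_i with v^{(n)}(z) > 0. -/

import Mathlib

/-- Sort the values of a multiset of reals in nonincreasing order. -/
noncomputable def descSort (s : Multiset ℝ) : List ℝ :=
  (s.sort (· ≤ ·)).reverse

/-- `∑_j λ^j * l_j` for a list `l` (0-based exponents). -/
noncomputable def smoothSum (lam : ℝ) (l : List ℝ) : ℝ :=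
  ∑ j ∈ Finset.range l.length, lam ^ j * l.getD j 0

/-- The smoothed weighted coverage function:
`f(Z) = ∑_{n<N} ∑_j λ^{j} v^{(n)}(z_{g^{(n)}(j)})` where for each aspect `n` the
values `v^{(n)}(z)`, `z ∈ Z`, are sorted nonincreasingly. -/
noncomputable def smoothCov {Ω : Type*} (lam : ℝ) (N : ℕ) (v : Ω → ℕ → ℝ)
    (Z : Finset Ω) : ℝ :=
  ∑ n ∈ Finset.range N, smoothSum lam (descSort (Z.val.map (fun z => v z n)))

open scoped Classical in
/-- The greedy weighted dot product `w_Z^T v(z)`, where `w_Z^{(n)} = λ^{c(n)}`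
and `c(n)` is the number of elements of `Z` with positive `n`-th weight. -/
noncomputable def wdot {Ω : Type*} (lam : ℝ) (N : ℕ) (v : Ω → ℕ → ℝ)
    (Z : Finset Ω) (z : Ω) : ℝ :=
  ∑ n ∈ Finset.range N, lam ^ (Z.filter (fun y => 0 < v y n)).card * v z n

lemma smoothSum_nil (lam : ℝ) : smoothSum lam [] = 0 := by
  simp [smoothSum]

lemma smoothSum_cons (lam b : ℝ) (t : List ℝ) :
    smoothSum lam (b :: t) = b + lam * smoothSum lam t := by
  rw [smoothSum, smoothSum, List.length_cons, Finset.sum_range_succ']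
  simp only [List.getD_cons_succ, List.getD_cons_zero, pow_zero, one_mul, pow_succ]
  rw [Finset.mul_sum, add_comm]
  congr 1
  apply Finset.sum_congr rfl
  intro j _
  ring

lemma smoothSum_nonneg (lam : ℝ) (hlam0 : 0 ≤ lam) :
    ∀ (l : List ℝ), (∀ x ∈ l, 0 ≤ x) → 0 ≤ smoothSum lam l
  | [], _ => by simp [smoothSum_nil]
  | b :: t, h => by
    rw [smoothSum_cons]
    have h1 : 0 ≤ smoothSum lam t :=
      smoothSum_nonneg lam hlam0 t (fun x hx => h x (List.mem_cons_of_mem _ hx))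
    have h2 : 0 ≤ b := h b (List.mem_cons_self)
    positivity

open scoped Classical in
lemma smoothSum_le_geom (lam : ℝ) (hlam0 : 0 ≤ lam) (hlam1 : lam ≤ 1) (a : ℝ)
    (ha : 0 ≤ a) :
    ∀ (l : List ℝ), (∀ x ∈ l, 0 ≤ x) → (∀ x ∈ l, x ≤ a) →
      smoothSum lam l ≤
        a * ∑ j ∈ Finset.range (l.countP (fun x => decide (0 < x))), lam ^ j
  | [], _, _ => by simp [smoothSum_nil]
  | b :: t, h0, h1 => by
    rw [smoothSum_cons]
    have ih := smoothSum_le_geom lam hlam0 hlam1 a ha t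
      (fun x hx => h0 x (List.mem_cons_of_mem _ hx))
      (fun x hx => h1 x (List.mem_cons_of_mem _ hx))
    have hb0 : 0 ≤ b := h0 b (List.mem_cons_self)
    have hba : b ≤ a := h1 b (List.mem_cons_self)
    set c := t.countP (fun x => decide (0 < x)) with hc
    have hGnn : 0 ≤ ∑ j ∈ Finset.range c, lam ^ j :=
      Finset.sum_nonneg fun j _ => pow_nonneg hlam0 j
    by_cases hb : 0 < b
    · have hcount : (b :: t).countP (fun x => decide (0 < x)) = c + 1 := by
        rw [List.countP_cons]
        simp [hb, hc]
      rw [hcount, geom_sum_succ]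
      have := mul_le_mul_of_nonneg_left ih hlam0
      nlinarith
    · have hcount : (b :: t).countP (fun x => decide (0 < x)) = c := by
        rw [List.countP_cons]
        simp [hb, hc]
      have hb' : b = 0 := le_antisymm (not_lt.1 hb) hb0
      rw [hcount, hb']
      have hSnn : 0 ≤ smoothSum lam t :=
        smoothSum_nonneg lam hlam0 t (fun x hx => h0 x (List.mem_cons_of_mem _ hx))
      nlinarith

open scoped Classical in
lemma key_insert (lam : ℝ) (hlam0 : 0 ≤ lam) (hlam1 : lam ≤ 1) (a : ℝ)
    (ha : 0 ≤ a) :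
    ∀ (l : List ℝ), l.Pairwise (· ≥ ·) → (∀ x ∈ l, 0 ≤ x) →
      lam ^ (l.countP (fun x => decide (0 < x))) * a ≤
        smoothSum lam (List.orderedInsert (· ≥ ·) a l) - smoothSum lam l
  | [], _, _ => by
    simp only [List.orderedInsert, smoothSum_cons, smoothSum_nil, List.countP_nil]
    simp
  | b :: t, hs, h0 => by
    by_cases hab : a ≥ b
    · rw [List.orderedInsert_cons_of_le (r := (· ≥ ·)) t hab, smoothSum_cons]
      -- difference is a + (lam - 1) * smoothSum (b :: t)
      have hle : ∀ x ∈ b :: t, x ≤ a := by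
        intro x hx
        rcases List.mem_cons.1 hx with rfl | hx
        · exact hab
        · exact le_trans (List.rel_of_pairwise_cons hs hx) hab
      have hS := smoothSum_le_geom lam hlam0 hlam1 a ha (b :: t) h0 hle
      set c := (b :: t).countP (fun x => decide (0 < x)) with hc
      have hgeom : (1 - lam) * ∑ j ∈ Finset.range c, lam ^ j = 1 - lam ^ c := by
        have := geom_sum_mul lam c
        nlinarith
      have hSnn : 0 ≤ smoothSum lam (b :: t) := smoothSum_nonneg lam hlam0 _ h0
      have h2 : (1 - lam) * smoothSum lam (b :: t) ≤
          (1 - lam) * (a * ∑ j ∈ Finset.range c, lam ^ j) :=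
        mul_le_mul_of_nonneg_left hS (by linarith)
      nlinarith
    · have hins : List.orderedInsert (· ≥ ·) a (b :: t) =
          b :: List.orderedInsert (· ≥ ·) a t := by
        simp only [List.orderedInsert, if_neg hab]
      rw [hins, smoothSum_cons, smoothSum_cons]
      have hba : a < b := lt_of_not_ge hab
      have hb : 0 < b := lt_of_le_of_lt ha hba
      have ih := key_insert lam hlam0 hlam1 a ha t hs.of_cons
        (fun x hx => h0 x (List.mem_cons_of_mem _ hx))
      have hcount : (b :: t).countP (fun x => decide (0 < x)) =
          t.countP (fun x => decide (0 < x)) + 1 := by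
        rw [List.countP_cons]; simp [hb]
      rw [hcount, pow_succ]
      have := mul_le_mul_of_nonneg_left ih hlam0
      nlinarith

lemma descSort_sorted (s : Multiset ℝ) : (descSort s).Pairwise (· ≥ ·) := by
  rw [descSort, List.pairwise_reverse]
  exact s.pairwise_sort (· ≤ ·)

lemma descSort_perm (s : Multiset ℝ) : (descSort s : Multiset ℝ) = s := by
  rw [descSort]
  simp only [Multiset.coe_reverse, Multiset.sort_eq]

lemma descSort_cons (a : ℝ) (s : Multiset ℝ) :
    descSort (a ::ₘ s) = List.orderedInsert (· ≥ ·) a (descSort s) := by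
  apply List.Perm.eq_of_pairwise' (r := (· ≥ ·)) (descSort_sorted _)
    (List.Pairwise.orderedInsert _ _ (descSort_sorted s))
  have h1 : (descSort (a ::ₘ s) : Multiset ℝ) = a ::ₘ s := descSort_perm _
  have h2 : (List.orderedInsert (· ≥ ·) a (descSort s) : Multiset ℝ) = a ::ₘ s := by
    have := List.perm_orderedInsert (· ≥ ·) a (descSort s)
    have h3 : (List.orderedInsert (· ≥ ·) a (descSort s) : Multiset ℝ) =
        (a :: descSort s : List ℝ) := Quot.sound this
    rw [h3, ← Multiset.cons_coe, descSort_perm]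
  rw [← Multiset.coe_eq_coe, h1, h2]

/-- the marginal gain of adding `z` to `Z` is at least `w_Z^T v(z)`. -/
theorem marginal_gain_ge_wdot {Ω : Type*} [DecidableEq Ω] (lam : ℝ)
    (hlam0 : 0 ≤ lam) (hlam1 : lam ≤ 1) (N : ℕ) (v : Ω → ℕ → ℝ)
    (hv : ∀ z n, 0 ≤ v z n) (Z : Finset Ω) (z : Ω) (hz : z ∉ Z) :
    wdot lam N v Z z ≤ smoothCov lam N v (insert z Z) - smoothCov lam N v Z := by
  classical
  rw [wdot, smoothCov, smoothCov, ← Finset.sum_sub_distrib]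
  apply Finset.sum_le_sum
  intro n _
  have hins : (insert z Z).val = z ::ₘ Z.val := Finset.insert_val_of_notMem hz
  rw [hins, Multiset.map_cons, descSort_cons]
  have hl0 : ∀ x ∈ descSort (Z.val.map (fun y => v y n)), 0 ≤ x := by
    intro x hx
    have hx' : x ∈ (descSort (Z.val.map (fun y => v y n)) : Multiset ℝ) := hx
    rw [descSort_perm] at hx'
    obtain ⟨y, _, rfl⟩ := Multiset.mem_map.1 hx'
    exact hv y n
  have key := key_insert lam hlam0 hlam1 (v z n) (hv z n)
    (descSort (Z.val.map (fun y => v y n))) (descSort_sorted _) hl0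
  have hcount : (descSort (Z.val.map (fun y => v y n))).countP
      (fun x => decide (0 < x)) = (Z.filter (fun y => 0 < v y n)).card := by
    have h1 : ((descSort (Z.val.map (fun y => v y n))).countP
        (fun x => decide (0 < x)) : ℕ) =
        Multiset.countP (fun x => 0 < x)
          (descSort (Z.val.map (fun y => v y n)) : Multiset ℝ) := rfl
    rw [h1, descSort_perm, Multiset.countP_map, Finset.card_def, Finset.filter_val]
  rw [hcount] at key
  exact key
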